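/- arXiv:1804.00269 — 3 statements merged into one kernel-verified Lean document; each statement's English description precedes it below -/
import Mathlib

section
/- Let Q be a quandle with operation ◁, let G = Inn(Q) be the group generated by the maps (• ◁ y) for y ∈ Q, acting on Q on the right, and fix x₀ ∈ Q. Equip G with the quandle operation g ◁ h := z₀⁻¹ g h⁻¹ z₀ h where z₀ = (• ◁ x₀). Then the map G → Q sending g to x₀ · g is a quandle homomorphism. -/
/-!
Right distributivity says that every right translation `S y` is an automorphism of `(Q, ◁)`,
so all of `Inn(Q)` preserves `◁`. Since `S x₀` fixes `x₀` by idempotency, evaluating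
`g ◁ h = h * S x₀ * h⁻¹ * g * (S x₀)⁻¹` at `x₀` gives `h (S x₀ (h⁻¹ (g x₀))) = h (h⁻¹ (g x₀) ◁ x₀)`,
which is `g x₀ ◁ h x₀` because `h` is an automorphism.
-/

open Equiv

def Equiv.Perm.opAut {Q : Type*} (op : Q → Q → Q) : Subgroup (Perm Q) where
  carrier := {f | ∀ a b, f (op a b) = op (f a) (f b)}
  one_mem' _ _ := rfl
  mul_mem' {f g} (hf : ∀ a b, _) (hg : ∀ a b, _) a b := by
    rw [Perm.mul_apply, hg, hf]; rfl
  inv_mem' {f} (hf : ∀ a b, _) a b := by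
    apply f.injective
    simp only [hf, Perm.coe_inv, apply_symm_apply]

theorem closure_range_le_opAut {Q : Type*} (op : Q → Q → Q) (S : Q → Perm Q)
    (hS : ∀ y x, S y x = op x y) (q3 : ∀ x y z, op (op x y) z = op (op x z) (op y z)) :
    Subgroup.closure (Set.range S) ≤ Perm.opAut op := by
  rw [Subgroup.closure_le]
  rintro _ ⟨y, rfl⟩ a b
  simp only [hS]
  exact q3 a b y

theorem inv_apply_self_of_idempotent {Q : Type*} (op : Q → Q → Q) (S : Q → Perm Q)
    (hS : ∀ y x, S y x = op x y) (q1 : ∀ x, op x x = x) (x : Q) : (S x)⁻¹ x = x := by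
  rw [Perm.inv_eq_iff_eq, hS, q1]

theorem stmt2_general {Q : Type*} (op : Q → Q → Q) (S : Q → Equiv.Perm Q)
    (hS : ∀ y x, S y x = op x y)
    (q1 : ∀ x, op x x = x)
    (q3 : ∀ x y z, op (op x y) z = op (op x z) (op y z))
    (x₀ : Q) (g h : Equiv.Perm Q)
    (hh : h ∈ Subgroup.closure (Set.range S)) :
    (h * S x₀ * h⁻¹ * g * (S x₀)⁻¹) x₀ = op (g x₀) (h x₀) := by
  have h_aut : h ∈ Perm.opAut op := closure_range_le_opAut op S hS q3 hh
  simp only [Perm.mul_apply, inv_apply_self_of_idempotent op S hS q1, hS, h_aut _,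
    Perm.coe_inv, apply_symm_apply]

/-- For a quandle `Q` with inner automorphism group `G = Inn(Q)` (generated by the right
translations `S y = (· ◁ y)`, acting on `Q` on the right, so that `x · g := g x` and the
product `g ⊛ h` is "`g` then `h`", i.e. `h * g` in `Equiv.Perm Q`), the evaluation map
`g ↦ x₀ · g` is a quandle homomorphism from `G` with `g ◁ h := z₀⁻¹ ⊛ g ⊛ h⁻¹ ⊛ z₀ ⊛ h`
(`z₀ = S x₀`) to `Q`; in Lean's multiplication convention `g ◁ h = h * z₀ * h⁻¹ * g * z₀⁻¹`. -/
theorem stmt2 {Q : Type*} (op : Q → Q → Q) (S : Q → Equiv.Perm Q)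
    (hS : ∀ y x, S y x = op x y)
    (q1 : ∀ x, op x x = x)
    (q3 : ∀ x y z, op (op x y) z = op (op x z) (op y z))
    (x₀ : Q) (g h : Equiv.Perm Q)
    (hg : g ∈ Subgroup.closure (Set.range S))
    (hh : h ∈ Subgroup.closure (Set.range S)) :
    (h * S x₀ * h⁻¹ * g * (S x₀)⁻¹) x₀ = op (g x₀) (h x₀) :=
  stmt2_general op S hS q1 q3 x₀ g h hh
end

section
/- The sphere S^m ⊂ ℝ^{m+1} with the antipodal-reflection quandle operation x ◁ y := 2⟨x,y⟩y − x is semi-homogeneous of level 2: for each a ∈ S^m, letting q = −a and O_a = {x ∈ S^m : ⟨x, a⟩ = 0} (the equator), the map x ↦ a ◁ x restricts to a 2-to-1 surjection S^m \ O_a → S^m \ {q}. -/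
/-!
If `a ◁ x = b` then `2⟪a, x⟫ • x = a + b`, so a unit solution `x` is parallel to `a + b ≠ 0`,
i.e. `x = ±(a + b) / ‖a + b‖`. Conversely both signs are solutions (and off the equator of `a`)
because `‖a + b‖² = 2⟪a, a + b⟫` for unit vectors `a`, `b`.
-/

open RealInnerProductSpace

variable {E : Type*} [NormedAddCommGroup E] [InnerProductSpace ℝ E]

theorem norm_add_sq_eq_two_inner_add {a b : E} (h : ‖a‖ = ‖b‖) :
    ‖a + b‖ ^ 2 = 2 * ⟪a, a + b⟫ := by
  rw [norm_add_sq_real, inner_add_right, real_inner_self_eq_norm_sq, ← h]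
  ring

theorem two_inner_smul_self_normalize {a b : E} (h : ‖a‖ = ‖b‖) (hab : a + b ≠ 0) :
    (2 * ⟪a, ‖a + b‖⁻¹ • (a + b)⟫) • (‖a + b‖⁻¹ • (a + b)) = a + b := by
  have hr : ‖a + b‖ ≠ 0 := norm_ne_zero_iff.mpr hab
  have hsq := norm_add_sq_eq_two_inner_add h
  rw [real_inner_smul_right, smul_smul]
  convert one_smul ℝ (a + b) using 2
  field_simp
  linarith

theorem eq_normalize_or_eq_neg_of_smul_eq {x v : E} {t : ℝ} (hx : ‖x‖ = 1) (hv : v ≠ 0)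
    (h : t • x = v) : x = ‖v‖⁻¹ • v ∨ x = -(‖v‖⁻¹ • v) := by
  have ht : |t| = ‖v‖ := by rw [← h, norm_smul, hx, mul_one, Real.norm_eq_abs]
  have hx' : x = t⁻¹ • v := by
    rw [← h, smul_smul, inv_mul_cancel₀ (by rintro rfl; simp [← h] at hv), one_smul]
  rcases abs_eq (norm_nonneg v) |>.mp ht with rfl | rfl
  · exact .inl hx'
  · exact .inr (by rw [hx', inv_neg, neg_smul])

theorem setOf_sphere_reflect_eq_eq_pair {a b : E} (ha : ‖a‖ = 1) (hb : ‖b‖ = 1) (hab : b ≠ -a) :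
    {x : E | ‖x‖ = 1 ∧ ⟪x, a⟫ ≠ 0 ∧ (2 * ⟪a, x⟫) • x - a = b} =
      {‖a + b‖⁻¹ • (a + b), -(‖a + b‖⁻¹ • (a + b))} := by
  have hab0 : a + b ≠ 0 := fun h => hab (eq_neg_of_add_eq_zero_right h)
  have hc := two_inner_smul_self_normalize (ha.trans hb.symm) hab0
  have hnc : ‖‖a + b‖⁻¹ • (a + b)‖ = 1 := norm_smul_inv_norm hab0
  ext x
  simp only [Set.mem_ofPred_eq, Set.mem_insert_iff, Set.mem_singleton_iff, sub_eq_iff_eq_add']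
  constructor
  · rintro ⟨hx, -, hxb⟩
    exact eq_normalize_or_eq_neg_of_smul_eq hx hab0 hxb
  · intro hx
    have hxb : (2 * ⟪a, x⟫) • x = a + b := by
      rcases hx with rfl | rfl
      · exact hc
      · rwa [inner_neg_right, mul_neg, neg_smul, smul_neg, neg_neg]
    refine ⟨by rcases hx with rfl | rfl <;> simp only [norm_neg, hnc], fun h0 => hab0 ?_, hxb⟩
    rw [← hxb, real_inner_comm, h0, mul_zero, zero_smul]

theorem card_sphere_reflect_eq {a b : E} (ha : ‖a‖ = 1) (hb : ‖b‖ = 1) (hab : b ≠ -a) :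
    Nat.card {x : E // ‖x‖ = 1 ∧ ⟪x, a⟫ ≠ 0 ∧ (2 * ⟪a, x⟫) • x - a = b} = 2 := by
  have hab0 : a + b ≠ 0 := fun h => hab (eq_neg_of_add_eq_zero_right h)
  set c := ‖a + b‖⁻¹ • (a + b)
  have hne : c ≠ -c := by
    intro h
    have h2c : (2 : ℝ) • c = 0 := by rw [two_smul]; nth_rw 1 [h]; exact neg_add_cancel c
    have hc0 : c = 0 := (smul_eq_zero.mp h2c).resolve_left two_ne_zero
    have hc1 : ‖c‖ = 1 := norm_smul_inv_norm hab0
    rw [hc0, norm_zero] at hc1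
    exact zero_ne_one hc1
  rw [← Set.coe_ofPred, Nat.card_coe_set_eq, setOf_sphere_reflect_eq_eq_pair ha hb hab,
    Set.ncard_pair hne]

/-- The sphere `S^m` with `x ◁ y := 2⟨x,y⟩y − x` is semi-homogeneous of level 2: for each
unit vector `a`, every point `b` of `S^m ∖ {−a}` has exactly two preimages in
`S^m ∖ {equator of a}` under `x ↦ a ◁ x = 2⟨a,x⟩x − a`. -/
theorem stmt10 (m : ℕ) (a b : EuclideanSpace ℝ (Fin (m + 1)))
    (ha : ‖a‖ = 1) (hb : ‖b‖ = 1) (hab : b ≠ -a) :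
    Nat.card {x : EuclideanSpace ℝ (Fin (m + 1)) //
      ‖x‖ = 1 ∧ (inner ℝ x a : ℝ) ≠ 0 ∧ (2 * (inner ℝ a x : ℝ)) • x - a = b} = 2 :=
  card_sphere_reflect_eq ha hb hab
end

section
/- The map 𝒞 : (ℝ²)² → ℝ sending ((x₁,y₁),(x₂,y₂)) to x₁y₂ − x₂y₁ is a rack 2-cocycle for the quandle Q = ℝ² with x ◁ y = 2y − x; that is, for all a, b, c ∈ ℝ²: 𝒞(a, c) − 𝒞(a ◁ b, c) − 𝒞(a, b) + 𝒞(a ◁ c, b ◁ c) = 0 (the rack 2-cocycle condition), and 𝒞 is not a coboundary, i.e., there is no map f : ℝ² → ℝ with 𝒞(a,b) = f(a) − f(a ◁ b) for all a, b. -/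
/-- The quandle operation `a ◁ b = 2b − a` on `ℝ²`. -/
def dop (a b : ℝ × ℝ) : ℝ × ℝ := (2 : ℝ) • b - a

/-- The determinant form `𝒞(a, b) = a₁b₂ − b₁a₂`. -/
def dC (a b : ℝ × ℝ) : ℝ := a.1 * b.2 - b.1 * a.2

/-!
On a module, `a ◁ b = 2b − a` is the core quandle, and the cocycle identity for an alternating
bilinear form `B` is a formal consequence of bilinearity and `B x x = 0`. A coboundary
`B a b = f a − f (2b − a)` has `f 0 = f (2b)` because `B 0 b = 0`; when `2` is invertible this
forces `f` to be constant, hence `B = 0`. The determinant form is alternating and nonzero.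
-/

namespace LinearMap

variable {R M N : Type*} [CommRing R] [AddCommGroup M] [Module R M] [AddCommGroup N] [Module R N]

theorem IsAlt.rack_cocycle {B : M →ₗ[R] M →ₗ[R] N} (hB : B.IsAlt) (a b c : M) :
    B a c - B ((2 : R) • b - a) c - B a b + B ((2 : R) • c - a) ((2 : R) • c - b) = 0 := by
  simp only [map_sub, map_smul, sub_apply, smul_apply, hB.self_eq_zero, smul_zero, zero_sub]
  rw [← hB.neg b c]
  module

theorem eq_zero_of_forall_eq_sub_core {K : Type*} [Field K] [NeZero (2 : K)] [Module K M]
    [Module K N] {B : M →ₗ[K] M →ₗ[K] N} {f : M → N}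
    (hf : ∀ a b, B a b = f a - f ((2 : K) • b - a)) : B = 0 := by
  have hconst : ∀ x, f x = f 0 := fun x => by
    have h := hf 0 ((2 : K)⁻¹ • x)
    rw [map_zero, zero_apply, sub_zero, smul_smul, mul_inv_cancel₀ two_ne_zero, one_smul,
      eq_comm, sub_eq_zero] at h
    exact h.symm
  ext a b
  rw [hf, hconst a, hconst (_ - a), sub_self, zero_apply, zero_apply]

end LinearMap

def detForm : (ℝ × ℝ) →ₗ[ℝ] (ℝ × ℝ) →ₗ[ℝ] ℝ :=
  LinearMap.mk₂ ℝ dC (fun _ _ _ => by simp [dC]; ring)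
    (fun _ _ _ => by simp [dC]; ring) (fun _ _ _ => by simp [dC]; ring)
    (fun _ _ _ => by simp [dC]; ring)

theorem detForm_isAlt : detForm.IsAlt := fun x => by
  simp [detForm, dC]

theorem detForm_ne_zero : detForm ≠ 0 := fun h => by
  simpa [detForm, dC] using congr($h (1, 0) (0, 1))

/-- `𝒞` is a rack 2-cocycle of the quandle `(ℝ², a ◁ b = 2b − a)` and is not a
coboundary. -/
theorem stmt16 :
    (∀ a b c : ℝ × ℝ,
      dC a c - dC (dop a b) c - dC a b + dC (dop a c) (dop b c) = 0) ∧
    ¬ ∃ f : ℝ × ℝ → ℝ, ∀ a b : ℝ × ℝ, dC a b = f a - f (dop a b) := by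
  refine ⟨detForm_isAlt.rack_cocycle, fun ⟨f, hf⟩ => ?_⟩
  exact detForm_ne_zero (LinearMap.eq_zero_of_forall_eq_sub_core hf)
end
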